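/- arXiv:2304.00139 — 5 statements merged into one kernel-verified Lean document; each statement's English description precedes it below -/
import Mathlib

section
/- Let ℳ be a countable structure in a countable relational language ℒ, with group action Aut(ℳ) ↷ M. For finite B ⊆ M and a ∈ M, define a ∈ Dcl(B) iff Drk(a, B) < ∞. Then a ∈ Dcl(B) implies that a ∈ M₀ for every ℒ_{ω₁,ω}-elementary substructure ℳ₀ of ℳ with B ⊆ M₀. -/
/-- `a' ≅_B a`: some `g ∈ P` fixes `B` pointwise and sends `a` to `a'`. -/
def ConjOver (P : Type*) [Group P] {I : Type*} [MulAction P I] (B : Set I) (a a' : I) : Prop :=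
  ∃ g : P, (∀ b ∈ B, g • b = b) ∧ g • a = a'

/-- Deissler rank: `DrkLe P α a B` means `Drk(a, B) ≤ α`. -/
def DrkLe (P : Type*) [Group P] {I : Type*} [MulAction P I] (α : Ordinal) (a : I) (B : Set I) : Prop :=
  (∀ g : P, (∀ b ∈ B, g • b = b) → g • a = a) ∨
  ∃ c : I, ∀ c' : I, ConjOver P B c c' →
    ∃ β : Ordinal, ∃ _ : β < α, DrkLe P β a (insert c' B)
termination_by α


/-- A subset `M₀` of the countable structure carries an `ℒ_{ω₁,ω}`-elementary substructure
iff every finite type over it (in the sense of orbits of the automorphism group `P`)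
is realized in it. -/
def IsElemSub (P : Type*) [Group P] {I : Type*} [MulAction P I] (M₀ : Set I) : Prop :=
  ∀ D : Set I, D.Finite → D ⊆ M₀ → ∀ e : I, ∃ e' ∈ M₀, ConjOver P D e e'

/-!
Induction on the rank. If every automorphism fixing `B` fixes `a`, the realization of the
orbit of `a` over `B` that `M₀` must contain is `a` itself. Otherwise the witness `c` of
`Drk(a, B) ≤ α` has a conjugate `c'` over `B` inside `M₀`, and `Drk(a, B ∪ {c'}) < α`.
-/

section

variable {P : Type*} [Group P] {I : Type*} [MulAction P I] {M₀ B : Set I} {a : I}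

theorem IsElemSub.mem_of_fixed (hM : IsElemSub P M₀) (hB : B.Finite) (hBM : B ⊆ M₀)
    (hfix : ∀ g : P, (∀ b ∈ B, g • b = b) → g • a = a) : a ∈ M₀ := by
  obtain ⟨a', ha'M, g, hg, rfl⟩ := hM B hB hBM a
  rwa [hfix g hg] at ha'M

theorem IsElemSub.mem_of_drkLe (hM : IsElemSub P M₀) {α : Ordinal} (hα : DrkLe P α a B)
    (hB : B.Finite) (hBM : B ⊆ M₀) : a ∈ M₀ := by
  induction α using WellFoundedLT.induction generalizing B with
  | ind α ih =>
    rw [DrkLe] at hα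
    rcases hα with hfix | ⟨c, hc⟩
    · exact hM.mem_of_fixed hB hBM hfix
    · obtain ⟨c', hc'M, hconj⟩ := hM B hB hBM c
      obtain ⟨β, hβα, hβ⟩ := hc c' hconj
      exact ih β hβα hβ (hB.insert c') (Set.insert_subset hc'M hBM)

end

theorem stmt_9_general {P : Type*} [Group P] {I : Type*} [MulAction P I]
    (B : Set I) (hB : B.Finite) (a : I)
    (h : ∃ α : Ordinal, DrkLe P α a B) :
    ∀ M₀ : Set I, B ⊆ M₀ → IsElemSub P M₀ → a ∈ M₀ := by
  obtain ⟨α, hα⟩ := h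
  exact fun M₀ hBM hM => hM.mem_of_drkLe hα hB hBM

/-- Forward direction of Deissler's theorem: if `Drk(a, B) < ∞` (i.e. `a ∈ Dcl(B)` for
finite `B`), then `a` belongs to every `ℒ_{ω₁,ω}`-elementary substructure containing `B`. -/
theorem stmt_9 {P : Type*} [Group P] {I : Type*} [MulAction P I] [Countable I]
    (B : Set I) (hB : B.Finite) (a : I)
    (h : ∃ α : Ordinal, DrkLe P α a B) :
    ∀ M₀ : Set I, B ⊆ M₀ → IsElemSub P M₀ → a ∈ M₀ :=
  stmt_9_general B hB a h
end

section
/- Let ℳ be a countable structure with action Aut(ℳ) ↷ M. If a ∉ Dcl(B) for a finite B ⊆ M, then there exists M₀ ⊆ M containing B with a ∉ M₀, such that for every finite D ⊆ M₀ and e ∈ M there is some e' ∈ M₀ with e' ≅_D e (i.e., M₀ is the domain of an ℒ_{ω₁,ω}-elementary substructure avoiding a). -/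
universe u v w

theorem key {P : Type u} [Group P] {I : Type v} [MulAction P I] [Countable I]
    {B : Set I} {a : I} (h : ¬ ∃ α : Ordinal.{w}, DrkLe P α a B) (c : I) :
    ∃ c', ConjOver P B c c' ∧ ¬ ∃ α : Ordinal.{w}, DrkLe P α a (insert c' B) := by
  by_contra hc
  push_neg at hc
  classical
  haveI : Small.{w} I := small_lift.{v, 0, w} I
  set f : I → Ordinal.{w} := fun c' =>
    if h' : ConjOver P B c c' then (hc c' h').choose else 0 with hf
  refine h ⟨Order.succ (⨆ c', f c'), ?_⟩
  rw [DrkLe]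
  right
  refine ⟨c, fun c' hc' => ⟨f c', ⟨?_, ?_⟩⟩⟩
  · exact lt_of_le_of_lt (le_ciSup (Ordinal.bddAbove_of_small (s := Set.range f)) c')
      (Order.lt_succ _)
  · simp only [hf, dif_pos hc']
    exact (hc c' hc').choose_spec

theorem mem_zero {P : Type u} [Group P] {I : Type v} [MulAction P I]
    {B : Set I} {a : I} (ha : a ∈ B) : DrkLe P (0 : Ordinal.{w}) a B := by
  rw [DrkLe]
  exact Or.inl fun g hg => hg a ha

noncomputable def seq {P : Type u} [Group P] {I : Type v} [MulAction P I] [Countable I]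
    (enum : ℕ → I) (B : Set I) (a : I)
    (h : ¬ ∃ α : Ordinal.{w}, DrkLe P α a B) :
    ℕ → {S : Set I // ¬ ∃ α : Ordinal.{w}, DrkLe P α a S}
  | 0 => ⟨B, h⟩
  | (k + 1) =>
    let prev := seq enum B a h k
    ⟨insert (key prev.2 (enum (Nat.unpair k).2)).choose prev.1,
      ((key prev.2 (enum (Nat.unpair k).2)).choose_spec).2⟩


/-- Backward direction of Deissler's theorem: if `a ∉ Dcl(B)`, there is the domain `M₀` of
an `ℒ_{ω₁,ω}`-elementary substructure containing `B` and avoiding `a`. -/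
theorem stmt_10 {P : Type*} [Group P] {I : Type*} [MulAction P I] [Countable I]
    (B : Set I) (hB : B.Finite) (a : I)
    (h : ¬ ∃ α : Ordinal, DrkLe P α a B) :
    ∃ M₀ : Set I, B ⊆ M₀ ∧ a ∉ M₀ ∧
      ∀ D : Set I, D.Finite → D ⊆ M₀ → ∀ e : I, ∃ e' ∈ M₀, ConjOver P D e e' := by
  have : Nonempty I := ⟨a⟩
  obtain ⟨enum, henum⟩ := exists_surjective_nat I
  set s := seq enum B a h with hs
  have hmono : Monotone fun k => (s k).1 := by
    apply monotone_nat_of_le_succ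
    intro k
    simp only [hs, seq]
    exact Set.subset_insert _ _
  refine ⟨⋃ k, (s k).1, ?_, ?_, ?_⟩
  · exact Set.subset_iUnion (fun k => (s k).1) 0
  · rintro ⟨_, ⟨k, rfl⟩, hak⟩
    exact (s k).2 ⟨0, mem_zero hak⟩
  · intro D hD hDM e
    classical
    have hsub : ∀ d ∈ D, ∃ n, d ∈ (s n).1 := fun d hd => Set.mem_iUnion.1 (hDM hd)
    choose idx hidx using hsub
    set idx' : I → ℕ := fun d => if hd : d ∈ D then idx d hd else 0 with hidx'
    set n := hD.toFinset.sup idx' with hnn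
    have hn : D ⊆ (s n).1 := by
      intro d hd
      have h1 : idx' d ≤ n := Finset.le_sup (hD.mem_toFinset.2 hd)
      have h2 : d ∈ (s (idx' d)).1 := by
        simp only [hidx', dif_pos hd]
        exact hidx d hd
      exact hmono h1 h2
    obtain ⟨i, rfl⟩ := henum e
    set k := Nat.pair n i with hk
    refine ⟨(key (s k).2 (enum (Nat.unpair k).2)).choose, ?_, ?_⟩
    · refine Set.mem_iUnion.2 ⟨k + 1, ?_⟩
      simp only [hs, seq]
      exact Set.mem_insert _ _
    · have hconj := ((key (s k).2 (enum (Nat.unpair k).2)).choose_spec).1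
      obtain ⟨g, hg1, hg2⟩ := hconj
      have he : enum i = enum (Nat.unpair k).2 := by rw [hk, Nat.unpair_pair]
      rw [he]
      exact ⟨g, fun b hb => hg1 b (hmono (Nat.left_le_pair n i) (hn hb)), hg2⟩
end

section
/- Let P ↷ I be a group action. The operator Dcl defined by a ∈ Dcl(B) iff Drk(a, B₀) < ∞ for some finite B₀ ⊆ B is a closure operator on I which is invariant under P: π[Dcl(B)] = Dcl(π[B]) for every π ∈ P and B ⊆ I. -/
/-- A closure operator on a set (type) `I`. -/
structure IsClosureOp {I : Type*} (cl : Set I → Set I) : Prop where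
  extensive : ∀ A, A ⊆ cl A
  mono : ∀ A B : Set I, A ⊆ B → cl A ⊆ cl B
  idem : ∀ A, cl (cl A) = cl A

/-- `Dcl(B)`: the set of `a` with `Drk(a, B₀) < ∞` for some finite `B₀ ⊆ B`. -/
def Dcl (P : Type*) [Group P] {I : Type*} [MulAction P I] (B : Set I) : Set I :=
  {a | ∃ B₀ ⊆ B, B₀.Finite ∧ ∃ α : Ordinal.{0}, DrkLe P α a B₀}

section Aux

variable {P : Type*} [Group P] {I : Type*} [MulAction P I]

theorem DrkLe_mono_ord {α α' : Ordinal} {a : I} {B : Set I} (h : α ≤ α')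
    (hd : DrkLe P α a B) : DrkLe P α' a B := by
  rw [DrkLe] at hd ⊢
  rcases hd with h0 | ⟨c, hc⟩
  · exact Or.inl h0
  · exact Or.inr ⟨c, fun c' hc' => by
      obtain ⟨β, hβ, hd⟩ := hc c' hc'
      exact ⟨β, hβ.trans_le h, hd⟩⟩

theorem DrkLe_mono_set {α : Ordinal} {a : I} : ∀ {B B' : Set I}, B ⊆ B' →
    DrkLe P α a B → DrkLe P α a B' := by
  induction α using Ordinal.induction with
  | h α IH =>
    intro B B' hBB hd
    rw [DrkLe] at hd ⊢
    rcases hd with h0 | ⟨c, hc⟩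
    · exact Or.inl fun g hg => h0 g fun b hb => hg b (hBB hb)
    · refine Or.inr ⟨c, fun c' hc' => ?_⟩
      obtain ⟨g, hg, hgc⟩ := hc'
      obtain ⟨β, hβ, hd⟩ := hc c' ⟨g, fun b hb => hg b (hBB hb), hgc⟩
      exact ⟨β, hβ, IH β hβ (Set.insert_subset_insert hBB) hd⟩

/-- If `b` is fixed by everything fixing `B`, it can be removed. -/
theorem DrkLe_definable {α : Ordinal} {a b : I} : ∀ {B : Set I},
    (∀ g : P, (∀ x ∈ B, g • x = x) → g • b = b) →
    DrkLe P α a (insert b B) → DrkLe P α a B := by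
  induction α using Ordinal.induction with
  | h α IH =>
    intro B hdef hd
    rw [DrkLe] at hd ⊢
    rcases hd with h0 | ⟨c, hc⟩
    · refine Or.inl fun g hg => h0 g ?_
      intro x hx
      rcases hx with rfl | hx
      · exact hdef g hg
      · exact hg x hx
    · refine Or.inr ⟨c, fun c' hc' => ?_⟩
      obtain ⟨g, hg, hgc⟩ := hc'
      have hg' : ∀ x ∈ insert b B, g • x = x := by
        intro x hx
        rcases hx with rfl | hx
        · exact hdef g hg
        · exact hg x hx
      obtain ⟨β, hβ, hd⟩ := hc c' ⟨g, hg', hgc⟩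
      refine ⟨β, hβ, IH β hβ ?_ (DrkLe_mono_set (by intro x hx; simp at hx ⊢; tauto) hd)⟩
      intro g hg
      exact hdef g fun x hx => hg x (Set.mem_insert_of_mem _ hx)

theorem DrkLe_transfer {β : Ordinal} {b : I} : ∀ {α : Ordinal} {a : I} {B : Set I},
    DrkLe P β b B → DrkLe P α a (insert b B) → DrkLe P (α + β) a B := by
  induction β using Ordinal.induction with
  | h β IH =>
    intro α a B hb ha
    rw [DrkLe] at hb
    rcases hb with h0 | ⟨c, hc⟩
    · exact DrkLe_mono_ord (le_self_add (a := α) (b := β)) (DrkLe_definable h0 ha)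
    · rw [DrkLe]
      refine Or.inr ⟨c, fun c' hc' => ?_⟩
      obtain ⟨γ, hγ, hbd⟩ := hc c' hc'
      refine ⟨α + γ, ?_, IH γ hγ hbd (DrkLe_mono_set ?_ ha)⟩
      · exact (add_lt_add_iff_left α).mpr hγ
      · intro x hx; rcases hx with rfl | hx
        · exact Set.mem_insert _ _
        · exact Set.mem_insert_of_mem _ (Set.mem_insert_of_mem _ hx)

theorem DrkLe_smul {α : Ordinal} (π : P) : ∀ {a : I} {B : Set I},
    DrkLe P α a B → DrkLe P α (π • a) ((fun x => π • x) '' B) := by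
  induction α using Ordinal.induction with
  | h α IH =>
    intro a B hd
    rw [DrkLe] at hd ⊢
    have conj_fix : ∀ g : P, (∀ x ∈ (fun x => π • x) '' B, g • x = x) →
        ∀ b ∈ B, (π⁻¹ * g * π) • b = b := by
      intro g hg b hb
      have := hg (π • b) ⟨b, hb, rfl⟩
      rw [mul_smul, mul_smul, this, inv_smul_smul]
    rcases hd with h0 | ⟨c, hc⟩
    · refine Or.inl fun g hg => ?_
      have := h0 (π⁻¹ * g * π) (conj_fix g hg)
      rw [mul_smul, mul_smul] at this
      calc g • π • a = π • π⁻¹ • g • π • a := (smul_inv_smul π _).symm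
        _ = π • a := by rw [this]
    · refine Or.inr ⟨π • c, fun c' hc' => ?_⟩
      obtain ⟨g, hg, hgc⟩ := hc'
      have hconj : ConjOver P B c (π⁻¹ • c') := by
        refine ⟨π⁻¹ * g * π, conj_fix g hg, ?_⟩
        rw [mul_smul, mul_smul, hgc]
      obtain ⟨β, hβ, hd⟩ := hc _ hconj
      refine ⟨β, hβ, ?_⟩
      have := IH β hβ hd
      rwa [Set.image_insert_eq, smul_inv_smul] at this

/-- Eliminate a finite set `D` of parameters, each of finite rank over `C`. -/
theorem DrkLe_elim {D : Set I} (hD : D.Finite) {C : Set I} {a : I} :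
    ∀ {α : Ordinal.{0}},
      (∀ b ∈ D, ∃ β : Ordinal.{0}, DrkLe P β b C) →
      DrkLe P α a (D ∪ C) → ∃ γ : Ordinal.{0}, DrkLe P γ a C := by
  refine Set.Finite.induction_on (motive := fun D _ => ∀ {α : Ordinal.{0}},
      (∀ b ∈ D, ∃ β : Ordinal.{0}, DrkLe P β b C) →
      DrkLe P α a (D ∪ C) → ∃ γ : Ordinal.{0}, DrkLe P γ a C) D hD ?_ ?_
  · intro α _ ha
    exact ⟨α, by simpa using ha⟩
  · intro b D hb hD IH α hmem ha
    obtain ⟨β, hβ⟩ := hmem b (Set.mem_insert _ _)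
    have hβ' : DrkLe P β b (D ∪ C) := DrkLe_mono_set Set.subset_union_right hβ
    have ha' : DrkLe P α a (insert b (D ∪ C)) := by
      apply DrkLe_mono_set _ ha
      rw [Set.insert_union]
    have := DrkLe_transfer hβ' ha'
    rw [← Set.union_self (D ∪ C), ← Set.union_assoc] at this
    exact IH (fun x hx => hmem x (Set.mem_insert_of_mem _ hx))
      (DrkLe_mono_set (by intro x hx; simp at hx ⊢; tauto) this)

theorem Dcl_smul_subset (π : P) (B : Set I) :
    (fun x => π • x) '' Dcl P B ⊆ Dcl P ((fun x => π • x) '' B) := by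
  rintro _ ⟨a, ⟨B₀, hB₀, hfin, α, hd⟩, rfl⟩
  exact ⟨(fun x => π • x) '' B₀, Set.image_mono hB₀, hfin.image _, α, DrkLe_smul π hd⟩

end Aux

/-- `Dcl` is a closure operator which is invariant under the action of `P`. -/
theorem stmt_11 {P : Type*} [Group P] {I : Type*} [MulAction P I] [Countable I] :
    IsClosureOp (Dcl P (I := I)) ∧
    ∀ (π : P) (B : Set I), (fun x => π • x) '' Dcl P B = Dcl P ((fun x => π • x) '' B) := by
  have hext : ∀ A : Set I, A ⊆ Dcl P A := by
    intro A a ha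
    refine ⟨{a}, Set.singleton_subset_iff.mpr ha, Set.finite_singleton a, 0, ?_⟩
    rw [DrkLe]
    exact Or.inl fun g hg => hg a rfl
  have hmono : ∀ A B : Set I, A ⊆ B → Dcl P A ⊆ Dcl P B := by
    rintro A B hAB a ⟨B₀, hB₀, hfin, α, hd⟩
    exact ⟨B₀, hB₀.trans hAB, hfin, α, hd⟩
  constructor
  · refine ⟨hext, hmono, fun A => Set.Subset.antisymm ?_ (hext _)⟩
    rintro a ⟨B₀, hB₀, hfin, α, hd⟩
    -- each b ∈ B₀ lies in Dcl P A; pick finite witness sets and take their union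
    choose C hCA hCfin β hC using fun (b : B₀) => hB₀ b.2
    have hCunion : ∀ b ∈ B₀, ∃ γ : Ordinal.{0}, DrkLe P γ b (⋃ x : B₀, C x) := by
      intro b hb
      exact ⟨β ⟨b, hb⟩, DrkLe_mono_set (Set.subset_iUnion_of_subset ⟨b, hb⟩ subset_rfl)
        (hC ⟨b, hb⟩)⟩
    obtain ⟨γ, hγ⟩ := DrkLe_elim hfin hCunion
      (DrkLe_mono_set Set.subset_union_left hd)
    have : Finite ↥B₀ := hfin.to_subtype
    exact ⟨⋃ x : B₀, C x, Set.iUnion_subset fun x => hCA x,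
      Set.finite_iUnion fun x => hCfin x, γ, hγ⟩
  · intro π B
    refine Set.Subset.antisymm (Dcl_smul_subset π B) ?_
    have h2 := Dcl_smul_subset π⁻¹ ((fun x => π • x) '' B)
    have himg : (fun x => π⁻¹ • x) '' ((fun x => π • x) '' B) = B := by
      rw [← Set.image_comp]
      simp [Function.comp]
    rw [himg] at h2
    intro x hx
    exact ⟨π⁻¹ • x, h2 ⟨x, hx, rfl⟩, smul_inv_smul π x⟩
end

section
/- Let P ↷ I be a group action. For finite B ⊆ I and a ∈ I, the disjointifying rank Krk satisfies monotonicity: if B ⊆ C are finite subsets of I, then Krk(a, C) ≤ Krk(a, B). -/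
/-- Disjointifying rank: `KrkLe P α a B` means `Krk(a, B) ≤ α`. -/
def KrkLe (P : Type*) [Group P] {I : Type*} [MulAction P I] (α : Ordinal) (a : I) (B : Set I) : Prop :=
  (∀ g : P, (∀ b ∈ B, g • b = b) → g • a = a) ∨
  (∃ c : I, ∀ c' : I, ConjOver P B c c' →
    ∃ β : Ordinal, ∃ _ : β < α, KrkLe P β a (insert c' B)) ∨
  (∀ a' : I, ConjOver P B a a' →
    (∃ β : Ordinal, ∃ _ : β < α, KrkLe P β a (insert a' B)) ∨
    (∃ β : Ordinal, ∃ _ : β < α, KrkLe P β a' (insert a B)))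
termination_by α

section

variable {P : Type*} [Group P] {I : Type*} [MulAction P I]

theorem ConjOver.of_subset {B C : Set I} (hBC : B ⊆ C) {a a' : I} (h : ConjOver P C a a') :
    ConjOver P B a a' :=
  let ⟨g, hg, hga⟩ := h
  ⟨g, fun b hb => hg b (hBC hb), hga⟩

theorem KrkLe.mono_set {α : Ordinal} {a : I} {B C : Set I} (hBC : B ⊆ C)
    (h : KrkLe P α a B) : KrkLe P α a C := by
  induction α using WellFoundedLT.induction generalizing a B C with
  | ind α IH =>
    have mono_below : ∀ {x : I} {B' C' : Set I}, B' ⊆ C' →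
        (∃ β : Ordinal, ∃ _ : β < α, KrkLe P β x B') →
        ∃ β : Ordinal, ∃ _ : β < α, KrkLe P β x C' :=
      fun hBC' ⟨β, hβ, hk⟩ => ⟨β, hβ, IH β hβ hBC' hk⟩
    have hins : ∀ x : I, insert x B ⊆ insert x C := fun x => Set.insert_subset_insert hBC
    rw [KrkLe] at h ⊢
    rcases h with hfix | ⟨c, hc⟩ | hsplit
    · exact Or.inl fun g hg => hfix g fun b hb => hg b (hBC hb)
    · exact Or.inr <| Or.inl ⟨c, fun c' hc' => mono_below (hins c') (hc c' (hc'.of_subset hBC))⟩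
    · refine Or.inr <| Or.inr fun a' ha' => ?_
      exact (hsplit a' (ha'.of_subset hBC)).imp (mono_below (hins a')) (mono_below (hins a))

end

theorem stmt_12_general {P : Type*} [Group P] {I : Type*} [MulAction P I]
    (B C : Set I) (hBC : B ⊆ C) (a : I)
    (α : Ordinal) (h : KrkLe P α a B) :
    KrkLe P α a C := h.mono_set hBC

/-- Monotonicity of the disjointifying rank: if `B ⊆ C` then `Krk(a, C) ≤ Krk(a, B)`. -/
theorem stmt_12 {P : Type*} [Group P] {I : Type*} [MulAction P I]
    (B C : Set I) (hB : B.Finite) (hC : C.Finite) (hBC : B ⊆ C) (a : I)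
    (α : Ordinal) (h : KrkLe P α a B) :
    KrkLe P α a C :=
  stmt_12_general B C hBC a α h
end

section
/- Let P ↷ I be a group action with an indiscernible support function supp : [I]^{<ω} → [ω]^{<ω}. If a ∈ cl^min(B) (i.e., Krk(a, B) < ∞) for a finite B ⊆ I and a ∈ I, then supp(B ∪ {a}) = supp(B). -/
/-- An indiscernible support function for the action of `P` on `I`. -/
structure IndiscernibleSupp (P : Type*) [Group P] (I : Type*) [MulAction P I] [DecidableEq I] where
  supp : Finset I → Finset ℕ
  mono : ∀ A B : Finset I, A ⊆ B → supp A ⊆ supp B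
  indis : ∀ A B : Finset I, A ⊆ B → ∀ v' : Finset ℕ, supp A ⊆ v' →
    (v' \ supp A).card = (supp B \ supp A).card →
    ∃ g : P, (∀ a ∈ A, g • a = a) ∧ supp (B.image (fun x => g • x)) = v'

/-!
Write `newSupp B x` for `supp(B ∪ {x}) \ supp(B)`. By indiscernibility every `x` has a conjugate
over `B` whose new support has the size of that of `x` and avoids any prescribed finite set of
indices; take it to avoid `supp(B ∪ {a})` and induct on the rank of `a` over `B`. If `a` is fixed
over `B`, it is its own such conjugate. In the other clauses the induction hypothesis puts
`supp(B ∪ {a})` inside `supp(B ∪ {x'})` for the relevant conjugate `x'`, or the new support of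
`a'` inside `supp(B ∪ {a})`; either way disjointness forces the new support of `a` to be empty.
-/

theorem Finset.image_insert_smul_of_fixes {P I : Type*} [Group P] [MulAction P I] [DecidableEq I]
    {g : P} {B : Finset I} (hg : ∀ b ∈ B, g • b = b) (x : I) :
    (insert x B).image (g • ·) = insert (g • x) B := by
  rw [Finset.image_insert, Finset.image_congr hg, Finset.image_id']

namespace IndiscernibleSupp

variable {P : Type*} [Group P] {I : Type*} [MulAction P I] [DecidableEq I]
  (S : IndiscernibleSupp P I)

def newSupp (B : Finset I) (x : I) : Finset ℕ := S.supp (insert x B) \ S.supp B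

theorem newSupp_eq_empty_iff {B : Finset I} {x : I} :
    S.newSupp B x = ∅ ↔ S.supp (insert x B) = S.supp B := by
  rw [newSupp, Finset.sdiff_eq_empty_iff_subset]
  exact ⟨fun h => h.antisymm (S.mono _ _ (Finset.subset_insert _ _)), fun h => h.le⟩

theorem newSupp_eq_empty_of_subset_of_disjoint {B : Finset I} {x y : I}
    (hsub : S.supp (insert x B) ⊆ S.supp (insert y B))
    (hdisj : Disjoint (S.newSupp B y) (S.supp (insert x B))) : S.newSupp B x = ∅ :=
  (hdisj.mono_left (Finset.sdiff_subset_sdiff hsub subset_rfl)).eq_bot_of_le Finset.sdiff_subset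

theorem exists_smul_newSupp_disjoint (B : Finset I) (x : I) (T : Finset ℕ) :
    ∃ g : P, (∀ b ∈ B, g • b = b) ∧ Disjoint (S.newSupp B (g • x)) T ∧
      (S.newSupp B (g • x)).card = (S.newSupp B x).card := by
  obtain ⟨v, hvT, hcard⟩ :=
    (T ∪ S.supp B).finite_toSet.infinite_compl.exists_subset_card_eq (S.newSupp B x).card
  have hv : Disjoint v (T ∪ S.supp B) := Finset.disjoint_left.mpr fun _ hz => hvT hz
  have hnew : (S.supp B ∪ v) \ S.supp B = v := by
    rw [Finset.union_sdiff_left]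
    exact Finset.sdiff_eq_self_of_disjoint (hv.mono_right Finset.subset_union_right)
  obtain ⟨g, hgB, hg⟩ := S.indis B (insert x B) (Finset.subset_insert _ _) (S.supp B ∪ v)
    Finset.subset_union_left (by rw [hnew, hcard]; rfl)
  rw [Finset.image_insert_smul_of_fixes hgB] at hg
  refine ⟨g, hgB, ?_, ?_⟩ <;> rw [newSupp, hg, hnew]
  · exact hv.mono_right Finset.subset_union_left
  · exact hcard

theorem newSupp_eq_empty_of_krkLe (α : Ordinal) :
    ∀ (B : Finset I) (a : I), KrkLe P α a (B : Set I) → S.newSupp B a = ∅ := by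
  induction α using WellFoundedLT.induction with
  | _ α IH =>
  intro B a h
  have supp_subset : ∀ x y : I, (∃ β : Ordinal, ∃ _ : β < α, KrkLe P β x (insert y (B : Set I))) →
      S.supp (insert x B) ⊆ S.supp (insert y B) := by
    rintro x y ⟨β, hβ, hk⟩
    have := S.newSupp_eq_empty_iff.1 (IH β hβ (insert y B) x (by rwa [Finset.coe_insert]))
    exact this ▸ S.mono _ _ (Finset.insert_subset_insert _ (Finset.subset_insert _ _))
  obtain ⟨g, hgB, hdisj, hcard⟩ := S.exists_smul_newSupp_disjoint B a (S.supp (insert a B))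
  rw [KrkLe] at h
  rcases h with hfix | ⟨c, hc⟩ | hsplit
  · rw [hfix g hgB] at hdisj
    exact S.newSupp_eq_empty_of_subset_of_disjoint subset_rfl hdisj
  · obtain ⟨g', hg'B, hdisj', -⟩ := S.exists_smul_newSupp_disjoint B c (S.supp (insert a B))
    exact S.newSupp_eq_empty_of_subset_of_disjoint (supp_subset _ _ (hc _ ⟨g', hg'B, rfl⟩)) hdisj'
  · rcases hsplit _ ⟨g, hgB, rfl⟩ with hk | hk
    · exact S.newSupp_eq_empty_of_subset_of_disjoint (supp_subset _ _ hk) hdisj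
    · have : S.newSupp B (g • a) = ∅ :=
        hdisj.eq_bot_of_le (Finset.sdiff_subset.trans (supp_subset _ _ hk))
      rwa [this, Finset.card_empty, eq_comm, Finset.card_eq_zero] at hcard

end IndiscernibleSupp

/-- If `a ∈ cl^min(B)`, i.e. `Krk(a, B) < ∞`, then `supp(B ∪ {a}) = supp(B)`. -/
theorem stmt_16 {P : Type*} [Group P] {I : Type*} [MulAction P I] [DecidableEq I]
    (S : IndiscernibleSupp P I) (B : Finset I) (a : I)
    (h : ∃ α : Ordinal, KrkLe P α a (B : Set I)) :
    S.supp (insert a B) = S.supp B := by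
  obtain ⟨α, hα⟩ := h
  exact S.newSupp_eq_empty_iff.1 (S.newSupp_eq_empty_of_krkLe α B a hα)
end
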